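/- arXiv:2411.17145 — 2 statements merged into one kernel-verified Lean document; each statement's English description precedes it below -/
import Mathlib

section
/- For integers v, k ≥ 2, if an orthogonal array OA(2, k, v) exists, then CAN_X(2, k, v) = v(v+1). -/
/-- A permutation `π` of `[v]` covers a sequence `s` of distinct elements if the
elements appear in order in `π`, i.e. `π⁻¹(s i) < π⁻¹(s j)` for `i < j`. -/
def SeqCovers {v t : ℕ} (π : Equiv.Perm (Fin v)) (s : Fin t → Fin v) : Prop :=
  ∀ i j : Fin t, i < j → π.symm (s i) < π.symm (s j)

instance {v t : ℕ} (s : Fin t → Fin v) :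
    DecidablePred fun π : Equiv.Perm (Fin v) => SeqCovers π s := fun π => by
  unfold SeqCovers; infer_instance

/-- `X` is a sequence covering array SCA(N; t, v): a set of `N` permutations of `[v]`
such that every sequence of `t` distinct elements of `[v]` is covered by at least one. -/
def IsSCA (N t v : ℕ) (X : Finset (Equiv.Perm (Fin v))) : Prop :=
  X.card = N ∧ ∀ s : Fin t → Fin v, Function.Injective s → ∃ π ∈ X, SeqCovers π s

/-- `μ(T)` for a `t`-way interaction with symbol vector `ν`: the product over symbols `σ`
of `|τ_σ(T)|!` where `τ_σ(T)` is the set of positions carrying symbol `σ`. -/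
def mu {w t : ℕ} (ν : Fin t → Fin w) : ℕ :=
  ∏ σ : Fin w, Nat.factorial (Finset.univ.filter fun i => ν i = σ).card

/-- The number of rows of `C` covering the interaction given by distinct columns `c i`
and symbols `ν i`. -/
def CoversCount {κ : Type} {w t : ℕ}
    (C : Multiset (κ → Fin w)) (c : Fin t → κ) (ν : Fin t → Fin w) : ℕ :=
  C.countP fun ρ => ∀ i, ρ (c i) = ν i

/-- `C` is an excess coverage array CA_X(N; t, k, v): an `N × k` array (multiset of rows)
over `[v]` in which every `t`-way interaction `T` is covered by at least `μ(T)` rows. -/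
def IsCAX (N t k v : ℕ) (C : Multiset (Fin k → Fin v)) : Prop :=
  Multiset.card C = N ∧
  ∀ c : Fin t → Fin k, Function.Injective c →
    ∀ ν : Fin t → Fin v, mu ν ≤ CoversCount C c ν

/-- `C` is a (strength 2) orthogonal array OA(2, k, v): a `v² × k` array over `[v]` in
which every 2-way interaction is covered by exactly one row. -/
def IsOA2 (k v : ℕ) (C : Multiset (Fin k → Fin v)) : Prop :=
  Multiset.card C = v ^ 2 ∧
  ∀ c : Fin 2 → Fin k, Function.Injective c →
    ∀ ν : Fin 2 → Fin v, CoversCount C c ν = 1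

/-- `C` is a covering array CA(N; t, k, v): every `t`-way interaction is covered by at
least one row. -/
def IsCA (N t k v : ℕ) (C : Multiset (Fin k → Fin v)) : Prop :=
  Multiset.card C = N ∧
  ∀ c : Fin t → Fin k, Function.Injective c →
    ∀ ν : Fin t → Fin v, 1 ≤ CoversCount C c ν

/-- `CAN(t, k, v)`: the smallest `N` for which a CA(N; t, k, v) exists. -/
noncomputable def CAN (t k v : ℕ) : ℕ :=
  sInf {N | ∃ C : Multiset (Fin k → Fin v), IsCA N t k v C}

/-- `CAN_X(t, k, v)`: the smallest `N` for which a CA_X(N; t, k, v) exists. -/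
noncomputable def CANX (t k v : ℕ) : ℕ :=
  sInf {N | ∃ C : Multiset (Fin k → Fin v), IsCAX N t k v C}

/-! In any two fixed columns each row covers exactly one of the `v²` interactions, so
`N ≥ ∑ μ(T) = v² + v`, the `v` interactions with equal symbols needing two rows. An OA(2, k, v)
covers every interaction once; appending the `v` constant rows gives the second cover of each
equal-symbol interaction and attains the bound. -/

lemma mu_two {v : ℕ} (ν : Fin 2 → Fin v) : mu ν = if ν 0 = ν 1 then 2 else 1 := by
  have hcard : ∀ σ : Fin v, (Finset.univ.filter fun i : Fin 2 => ν i = σ).card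
      = (if ν 0 = σ then 1 else 0) + (if ν 1 = σ then 1 else 0) := fun σ => by
    rw [Finset.card_filter, Fin.sum_univ_two]
  unfold mu
  simp_rw [hcard]
  split_ifs with h
  · rw [h]
    calc ∏ σ : Fin v, ((if ν 1 = σ then 1 else 0) + (if ν 1 = σ then 1 else 0)).factorial
        = ∏ σ : Fin v, if ν 1 = σ then 2 else 1 := by
          refine Finset.prod_congr rfl fun σ _ => ?_
          split_ifs <;> rfl
      _ = 2 := by simp
  · refine Finset.prod_eq_one fun σ _ => ?_
    by_cases h0 : ν 0 = σ <;> by_cases h1 : ν 1 = σ <;> simp_all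

lemma sum_mu_two (v : ℕ) : ∑ ν : Fin 2 → Fin v, mu ν = v * (v + 1) := by
  rw [← (piFinTwoEquiv fun _ => Fin v).symm.sum_comp, Fintype.sum_prod_type]
  have hrow : ∀ a : Fin v, ∑ b : Fin v, mu ![a, b] = v + 1 := fun a => by
    have h : ∀ b, mu ![a, b] = 1 + if a = b then 1 else 0 := fun b => by
      rw [mu_two]; split_ifs <;> simp_all
    simp [h, Finset.sum_add_distrib]
  show ∑ a, ∑ b, mu ![a, b] = _
  simp [hrow]

lemma sum_coversCount {κ : Type} {w t : ℕ} (C : Multiset (κ → Fin w)) (c : Fin t → κ) :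
    ∑ ν : Fin t → Fin w, CoversCount C c ν = Multiset.card C := by
  induction C using Multiset.induction with
  | empty => simp [CoversCount]
  | cons ρ C ih =>
    simp only [CoversCount, Multiset.countP_cons, Finset.sum_add_distrib] at ih ⊢
    rw [ih]
    simp [← funext_iff]

lemma IsCAX.sum_mu_le {N t k v : ℕ} {C : Multiset (Fin k → Fin v)} (hC : IsCAX N t k v C)
    (htk : t ≤ k) : ∑ ν : Fin t → Fin v, mu ν ≤ N := by
  obtain ⟨rfl, hcov⟩ := hC
  calc ∑ ν, mu ν ≤ ∑ ν, CoversCount C (Fin.castLE htk) ν :=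
        Finset.sum_le_sum fun ν _ => hcov _ (Fin.castLE_injective htk) ν
    _ = Multiset.card C := sum_coversCount C _

lemma coversCount_add {κ : Type} {w t : ℕ} (C D : Multiset (κ → Fin w)) (c : Fin t → κ)
    (ν : Fin t → Fin w) : CoversCount (C + D) c ν = CoversCount C c ν + CoversCount D c ν :=
  Multiset.countP_add _ _ _

def constRows (k v : ℕ) : Multiset (Fin k → Fin v) :=
  (Finset.univ : Finset (Fin v)).val.map fun a _ => a

lemma card_constRows (k v : ℕ) : Multiset.card (constRows k v) = v := by
  simp [constRows]

lemma one_le_coversCount_constRows {k v t : ℕ} (c : Fin t → Fin k) (a : Fin v) :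
    1 ≤ CoversCount (constRows k v) c fun _ => a :=
  Multiset.countP_pos.2 ⟨fun _ => a, Multiset.mem_map_of_mem _ (Finset.mem_univ a), fun _ => rfl⟩

lemma IsOA2.isCAX_add_constRows {k v : ℕ} {C : Multiset (Fin k → Fin v)} (hC : IsOA2 k v C) :
    IsCAX (v * (v + 1)) 2 k v (C + constRows k v) := by
  obtain ⟨hcard, hcov⟩ := hC
  refine ⟨by rw [Multiset.card_add, hcard, card_constRows]; ring, fun c hc ν => ?_⟩
  rw [coversCount_add, hcov c hc, mu_two]
  split_ifs with hν
  · have hconst : ν = fun _ => ν 0 := funext fun i => by fin_cases i <;> simp [hν]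
    rw [hconst]
    have := one_le_coversCount_constRows (v := v) c (ν 0)
    omega
  · omega

theorem canx_eq_of_oa_exists_general (v k : ℕ) (hk : 2 ≤ k)
    (h : ∃ C : Multiset (Fin k → Fin v), IsOA2 k v C) :
    CANX 2 k v = v * (v + 1) := by
  obtain ⟨C, hC⟩ := h
  have hCAX := hC.isCAX_add_constRows
  refine le_antisymm (Nat.sInf_le ⟨_, hCAX⟩) (le_csInf ⟨_, _, hCAX⟩ ?_)
  rintro N ⟨D, hD⟩
  simpa only [sum_mu_two] using hD.sum_mu_le hk

/-- For `v, k ≥ 2`, if an OA(2, k, v) exists then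
`CAN_X(2, k, v) = v(v+1)`. -/
theorem canx_eq_of_oa_exists (v k : ℕ) (hv : 2 ≤ v) (hk : 2 ≤ k)
    (h : ∃ C : Multiset (Fin k → Fin v), IsOA2 k v C) :
    CANX 2 k v = v * (v + 1) :=
  canx_eq_of_oa_exists_general v k hk h
end

section
/- Let k ≥ 5 and let C be a CA_X(v(v+1); 2, k, v) that does not contain an OA(2, k, v) as a submultiset of rows. Then there exists a column of C such that deleting that column yields a CA_X(v(v+1); 2, k−1, v) that also does not contain an OA(2, k−1, v). -/

lemma pair_inj {m : ℕ} {a b : Fin m} (h : a ≠ b) : Function.Injective ![a, b] := by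
  intro i j hij
  fin_cases i <;> fin_cases j <;> simp_all

lemma coversCount_eq {κ : Type} {w : ℕ} (C : Multiset (κ → Fin w)) (c : Fin 2 → κ)
    (ν : Fin 2 → Fin w) :
    CoversCount C c ν = C.countP fun ρ => ρ (c 0) = ν 0 ∧ ρ (c 1) = ν 1 := by
  unfold CoversCount
  refine Multiset.countP_congr rfl fun ρ _ => ?_
  simp [Fin.forall_fin_two]

lemma mu_pair {w : ℕ} (x y : Fin w) : mu ![x, y] = if x = y then 2 else 1 := by
  unfold mu
  split_ifs with h
  · subst h
    rw [Finset.prod_eq_single x]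
    · have : (Finset.univ.filter fun i : Fin 2 => ![x, x] i = x) = Finset.univ := by
        ext i; fin_cases i <;> simp
      rw [this]
      simp [Nat.factorial]
    · intro σ _ hσ
      have : (Finset.univ.filter fun i : Fin 2 => ![x, x] i = σ) = ∅ := by
        ext i; fin_cases i <;> simp [Ne.symm hσ]
      rw [this]; simp
    · intro h; exact absurd (Finset.mem_univ x) h
  · apply Finset.prod_eq_one
    intro σ _
    have hle : (Finset.univ.filter fun i : Fin 2 => ![x, y] i = σ).card ≤ 1 := by
      rw [Finset.card_le_one]
      intro i hi j hj
      simp only [Finset.mem_filter] at hi hj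
      fin_cases i <;> fin_cases j <;> simp_all <;>
        exact absurd (hi.2.trans hj.2.symm) h
    interval_cases hc : (Finset.univ.filter fun i : Fin 2 => ![x, y] i = σ).card <;> simp

lemma sum_coversCount_s12 {κ : Type} {w : ℕ} (C : Multiset (κ → Fin w)) (a b : κ) :
    ∑ p : Fin w × Fin w, C.countP (fun ρ => ρ a = p.1 ∧ ρ b = p.2) = Multiset.card C := by
  have key : ∀ p : Fin w × Fin w, C.countP (fun ρ => ρ a = p.1 ∧ ρ b = p.2)
      = (C.map fun ρ => (ρ a, ρ b)).count p := by
    intro p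
    rw [Multiset.count_map, Multiset.countP_eq_card_filter]
    congr 1
    refine Multiset.filter_congr fun ρ _ => ?_
    rw [Prod.ext_iff]
    constructor
    · rintro ⟨h1, h2⟩; exact ⟨h1.symm, h2.symm⟩
    · rintro ⟨h1, h2⟩; exact ⟨h1.symm, h2.symm⟩
  simp_rw [key]
  rw [show Multiset.card C = Multiset.card (C.map fun ρ => (ρ a, ρ b)) by
        rw [Multiset.card_map]]
  rw [← Multiset.toFinset_sum_count_eq]
  symm
  apply Finset.sum_subset (Finset.subset_univ _)
  intro p _ hp
  exact Multiset.count_eq_zero_of_notMem (fun hm => hp (Multiset.mem_toFinset.2 hm))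

lemma sum_mu_pair (w : ℕ) :
    ∑ p : Fin w × Fin w, (if p.1 = p.2 then 2 else 1) = w * (w + 1) := by
  rw [Fintype.sum_prod_type]
  have inner : ∀ x : Fin w, ∑ y : Fin w, (if x = y then 2 else 1) = w + 1 := by
    intro x
    have : ∀ y : Fin w, (if x = y then 2 else 1) = 1 + (if x = y then 1 else 0) := by
      intro y; split_ifs <;> rfl
    simp_rw [this]
    rw [Finset.sum_add_distrib, Finset.sum_const, Finset.sum_ite_eq]
    simp
  simp_rw [inner]
  simp [Finset.sum_const, mul_comm]

lemma exact_cover {v n : ℕ} {C : Multiset (Fin (n + 1) → Fin v)}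
    (hC : IsCAX (v * (v + 1)) 2 (n + 1) v C) {a b : Fin (n + 1)} (hab : a ≠ b)
    (x y : Fin v) :
    C.countP (fun ρ => ρ a = x ∧ ρ b = y) = if x = y then 2 else 1 := by
  have hle' : ∀ p ∈ (Finset.univ : Finset (Fin v × Fin v)),
      (if p.1 = p.2 then 2 else 1) ≤ C.countP (fun ρ => ρ a = p.1 ∧ ρ b = p.2) := by
    intro p _
    have h := hC.2 ![a, b] (pair_inj hab) ![p.1, p.2]
    rw [mu_pair, coversCount_eq] at h
    simpa using h
  have hsum : ∑ p : Fin v × Fin v, (if p.1 = p.2 then 2 else 1)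
      = ∑ p : Fin v × Fin v, C.countP (fun ρ => ρ a = p.1 ∧ ρ b = p.2) := by
    rw [sum_coversCount_s12, sum_mu_pair, hC.1]
  have := (Finset.sum_eq_sum_iff_of_le hle').1 hsum (x, y) (Finset.mem_univ _)
  exact this.symm

lemma coversCount_map {v n t : ℕ} (C : Multiset (Fin (n + 1) → Fin v)) (c₀ : Fin (n + 1))
    (c : Fin t → Fin n) (ν : Fin t → Fin v) :
    CoversCount (C.map fun ρ j => ρ (c₀.succAbove j)) c ν
      = CoversCount C (fun i => c₀.succAbove (c i)) ν := by
  unfold CoversCount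
  rw [Multiset.countP_map, ← Multiset.countP_eq_card_filter]


/-- For `k ≥ 5`, if `C` is a CA_X(v(v+1); 2, k, v) containing no
OA(2, k, v), then some column can be deleted so that the resulting
CA_X(v(v+1); 2, k−1, v) contains no OA(2, k−1, v) either. (Here `k = n + 1` and
deleting column `c₀` restricts each row along `Fin.succAbove c₀`.) -/
theorem cax_delete_column_no_oa (v n : ℕ) (hk : 5 ≤ n + 1)
    (C : Multiset (Fin (n + 1) → Fin v)) (hC : IsCAX (v * (v + 1)) 2 (n + 1) v C)
    (hno : ¬ ∃ D ≤ C, IsOA2 (n + 1) v D) :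
    ∃ c₀ : Fin (n + 1),
      IsCAX (v * (v + 1)) 2 n v (C.map fun ρ j => ρ (c₀.succAbove j)) ∧
      ¬ ∃ D ≤ (C.map fun ρ j => ρ (c₀.succAbove j)), IsOA2 n v D := by
  have hn : 4 ≤ n := by omega
  have hCAX' : ∀ c₀ : Fin (n + 1),
      IsCAX (v * (v + 1)) 2 n v (C.map fun ρ j => ρ (c₀.succAbove j)) := by
    intro c₀
    refine ⟨by rw [Multiset.card_map]; exact hC.1, fun c hc ν => ?_⟩
    rw [coversCount_map]
    exact hC.2 _ (Fin.succAbove_right_injective.comp hc) ν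
  by_contra hgoal
  push_neg at hgoal
  have hOAall : ∀ c₀ : Fin (n + 1), ∃ D, D ≤ C.map (fun ρ j => ρ (c₀.succAbove j)) ∧
      IsOA2 n v D := fun c₀ => hgoal c₀ (hCAX' c₀)
  -- key claim: near-constant rows exist
  have hconst : ∀ (c₀ : Fin (n + 1)) (z : Fin v), ∃ ρ ∈ C, ∀ a, a ≠ c₀ → ρ a = z := by
    intro c₀ z
    obtain ⟨D, hDle, hOA⟩ := hOAall c₀
    set M := C.map (fun ρ j => ρ (c₀.succAbove j)) with hM
    have hsub : ∀ (j j' : Fin n) (x y : Fin v), j ≠ j' →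
        (M - D).countP (fun ρ' => ρ' j = x ∧ ρ' j' = y) = if x = y then 1 else 0 := by
      intro j j' x y hjj
      have hMc : M.countP (fun ρ' => ρ' j = x ∧ ρ' j' = y) = if x = y then 2 else 1 := by
        rw [hM, Multiset.countP_map, ← Multiset.countP_eq_card_filter]
        exact exact_cover hC (fun h => hjj (Fin.succAbove_right_injective h)) x y
      have hDc : D.countP (fun ρ' => ρ' j = x ∧ ρ' j' = y) = 1 := by
        have h := hOA.2 ![j, j'] (pair_inj hjj) ![x, y]
        rw [coversCount_eq] at h
        simpa using h
      have hadd : D.countP (fun ρ' => ρ' j = x ∧ ρ' j' = y)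
          + (M - D).countP (fun ρ' => ρ' j = x ∧ ρ' j' = y)
          = M.countP (fun ρ' => ρ' j = x ∧ ρ' j' = y) := by
        rw [← Multiset.countP_add, add_tsub_cancel_of_le hDle]
      rw [hMc, hDc] at hadd
      by_cases hxy : x = y
      · rw [if_pos hxy] at hadd ⊢
        exact Nat.add_left_cancel (hadd.trans (by norm_num))
      · rw [if_neg hxy] at hadd ⊢
        exact Nat.add_left_cancel (hadd.trans (by norm_num))
    have h01 : (⟨0, by omega⟩ : Fin n) ≠ ⟨1, by omega⟩ := Fin.ne_of_val_ne (by norm_num)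
    obtain ⟨ρ', hρ'mem, hρ'p⟩ : ∃ ρ' ∈ M - D,
        ρ' ⟨0, by omega⟩ = z ∧ ρ' ⟨1, by omega⟩ = z := by
      have h := hsub ⟨0, by omega⟩ ⟨1, by omega⟩ z z h01
      rw [if_pos rfl] at h
      exact Multiset.countP_pos.1 (by rw [h]; exact Nat.one_pos)
    have hconst' : ∀ j : Fin n, ρ' j = z := by
      intro j
      by_contra hne
      obtain ⟨i, hij, hiz⟩ : ∃ i : Fin n, j ≠ i ∧ ρ' i = z := by
        by_cases h : j = ⟨0, by omega⟩
        · exact ⟨⟨1, by omega⟩, (by rw [h]; exact h01), hρ'p.2⟩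
        · exact ⟨⟨0, by omega⟩, h, hρ'p.1⟩
      have h0 := hsub j i (ρ' j) z hij
      rw [if_neg hne] at h0
      have hpos : 0 < (M - D).countP (fun ρ'' => ρ'' j = ρ' j ∧ ρ'' i = z) :=
        Multiset.countP_pos.2 ⟨ρ', hρ'mem, rfl, hiz⟩
      exact hpos.ne' h0
    have hρ'M : ρ' ∈ M := Multiset.mem_of_le (Multiset.sub_le_self M D) hρ'mem
    obtain ⟨ρ, hρC, hfρ⟩ := Multiset.mem_map.1 hρ'M
    refine ⟨ρ, hρC, fun a ha => ?_⟩
    obtain ⟨ja, hja⟩ := Fin.exists_succAbove_eq ha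
    calc ρ a = ρ (c₀.succAbove ja) := by rw [hja]
    _ = ρ' ja := by rw [← hfρ]
    _ = z := hconst' ja
  -- every constant row is in C
  have hgz : ∀ z : Fin v, (fun _ => z : Fin (n + 1) → Fin v) ∈ C := by
    intro z
    have hdone : ∀ (c : Fin (n + 1)) (ρ : Fin (n + 1) → Fin v), ρ ∈ C →
        (∀ a, a ≠ c → ρ a = z) → ρ c = z → (fun _ => z : Fin (n + 1) → Fin v) ∈ C := by
      intro c ρ hmem hoff hc
      have : ρ = fun _ => z := funext fun a => by
        by_cases h : a = c
        · rw [h]; exact hc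
        · exact hoff a h
      rwa [this] at hmem
    obtain ⟨ρ0, h0C, h0⟩ := hconst ⟨0, by omega⟩ z
    obtain ⟨ρ1, h1C, h1⟩ := hconst ⟨1, by omega⟩ z
    obtain ⟨ρ2, h2C, h2⟩ := hconst ⟨2, by omega⟩ z
    by_cases e0 : ρ0 ⟨0, by omega⟩ = z
    · exact hdone _ _ h0C h0 e0
    by_cases e1 : ρ1 ⟨1, by omega⟩ = z
    · exact hdone _ _ h1C h1 e1
    by_cases e2 : ρ2 ⟨2, by omega⟩ = z
    · exact hdone _ _ h2C h2 e2
    exfalso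
    have hlt3 : 3 < n + 1 := by omega
    have hlt4 : 4 < n + 1 := by omega
    have h34 : (⟨3, hlt3⟩ : Fin (n + 1)) ≠ ⟨4, hlt4⟩ := Fin.ne_of_val_ne (by norm_num)
    have hcnt := exact_cover hC h34 z z
    rw [if_pos rfl] at hcnt
    have p0 : ρ0 ⟨3, hlt3⟩ = z ∧ ρ0 ⟨4, hlt4⟩ = z :=
      ⟨h0 _ (Fin.ne_of_val_ne (by norm_num)), h0 _ (Fin.ne_of_val_ne (by norm_num))⟩
    have p1 : ρ1 ⟨3, hlt3⟩ = z ∧ ρ1 ⟨4, hlt4⟩ = z :=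
      ⟨h1 _ (Fin.ne_of_val_ne (by norm_num)), h1 _ (Fin.ne_of_val_ne (by norm_num))⟩
    have p2 : ρ2 ⟨3, hlt3⟩ = z ∧ ρ2 ⟨4, hlt4⟩ = z :=
      ⟨h2 _ (Fin.ne_of_val_ne (by norm_num)), h2 _ (Fin.ne_of_val_ne (by norm_num))⟩
    have d01 : ρ0 ≠ ρ1 := fun h => e0 (by rw [h]; exact h1 _ (Fin.ne_of_val_ne (by norm_num)))
    have d02 : ρ0 ≠ ρ2 := fun h => e0 (by rw [h]; exact h2 _ (Fin.ne_of_val_ne (by norm_num)))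
    have d12 : ρ1 ≠ ρ2 := fun h => e1 (by rw [h]; exact h2 _ (Fin.ne_of_val_ne (by norm_num)))
    obtain ⟨t0, rfl⟩ := Multiset.exists_cons_of_mem h0C
    have h1t : ρ1 ∈ t0 := by
      rcases Multiset.mem_cons.1 h1C with h | h
      · exact absurd h.symm d01
      · exact h
    obtain ⟨t1, rfl⟩ := Multiset.exists_cons_of_mem h1t
    have h2t : ρ2 ∈ t1 := by
      rcases Multiset.mem_cons.1 h2C with h | h
      · exact absurd h.symm d02
      · rcases Multiset.mem_cons.1 h with h' | h'
        · exact absurd h'.symm d12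
        · exact h'
    obtain ⟨t2, rfl⟩ := Multiset.exists_cons_of_mem h2t
    have key : t2.countP (fun ρ => ρ ⟨3, hlt3⟩ = z ∧ ρ ⟨4, hlt4⟩ = z) + 1 + 1 + 1 = 2 := by
      rw [← hcnt]
      simp only [Multiset.countP_cons, p0.1, p0.2, p1.1, p1.2, p2.1, p2.2, and_self,
        eq_self_iff_true, if_true]
    exact Nat.succ_ne_zero _ (Nat.succ_injective (Nat.succ_injective key))
  -- build an OA inside C and contradict hno
  set G : Multiset (Fin (n + 1) → Fin v) :=
    (Finset.univ.val : Multiset (Fin v)).map (fun z _ => z) with hGdef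
  have hinj : Function.Injective (fun (z : Fin v) (_ : Fin (n + 1)) => z) := fun z z' h =>
    congrFun h ⟨0, by omega⟩
  have hGle : G ≤ C := by
    rw [Multiset.le_iff_count]
    intro g
    rcases em (∃ z : Fin v, (fun _ => z : Fin (n + 1) → Fin v) = g) with ⟨z, rfl⟩ | hne
    · have h1 : G.count (fun _ => z : Fin (n + 1) → Fin v) = 1 := by
        rw [hGdef, Multiset.count_map_eq_count' _ _ hinj]
        exact Multiset.count_univ z
      rw [h1]
      exact Multiset.one_le_count_iff_mem.2 (hgz z)
    · have h0 : G.count g = 0 := by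
        rw [Multiset.count_eq_zero]
        intro hm
        obtain ⟨z, _, hz⟩ := Multiset.mem_map.1 hm
        exact hne ⟨z, hz⟩
      rw [h0]
      exact Nat.zero_le _
  have hGcard : Multiset.card G = v := by
    rw [hGdef, Multiset.card_map]
    simp [← Finset.card_def]
  refine hno ⟨C - G, Multiset.sub_le_self C G, ?_, ?_⟩
  · rw [Multiset.card_sub hGle, hC.1, hGcard]
    rw [show v * (v + 1) = v ^ 2 + v by ring, Nat.add_sub_cancel]
  · intro c hc ν
    have hab : c 0 ≠ c 1 := fun h => absurd (hc h) (by decide)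
    rw [coversCount_eq]
    have hCc := exact_cover hC hab (ν 0) (ν 1)
    have hGc : G.countP (fun ρ => ρ (c 0) = ν 0 ∧ ρ (c 1) = ν 1)
        = if ν 0 = ν 1 then 1 else 0 := by
      rw [hGdef, Multiset.countP_map, ← Finset.filter_val, ← Finset.card_def]
      by_cases hvv : ν 0 = ν 1
      · rw [if_pos hvv]
        rw [show Finset.filter (fun z : Fin v => z = ν 0 ∧ z = ν 1) Finset.univ = {ν 0} by
          ext z
          simp [← hvv]]
        exact Finset.card_singleton _
      · rw [if_neg hvv]
        rw [show Finset.filter (fun z : Fin v => z = ν 0 ∧ z = ν 1) Finset.univ = ∅ by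
          ext z
          simp only [Finset.mem_filter, Finset.mem_univ, true_and, Finset.notMem_empty,
            iff_false]
          rintro ⟨rfl, h2⟩
          exact hvv h2]
        exact Finset.card_empty
    have hadd : G.countP (fun ρ => ρ (c 0) = ν 0 ∧ ρ (c 1) = ν 1)
        + (C - G).countP (fun ρ => ρ (c 0) = ν 0 ∧ ρ (c 1) = ν 1)
        = C.countP (fun ρ => ρ (c 0) = ν 0 ∧ ρ (c 1) = ν 1) := by
      rw [← Multiset.countP_add, add_tsub_cancel_of_le hGle]
    rw [hCc, hGc] at hadd
    by_cases hvv : ν 0 = ν 1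
    · simp only [if_pos hvv] at hadd
      exact Nat.add_left_cancel (hadd.trans (by decide))
    · simp only [if_neg hvv] at hadd
      rw [Nat.zero_add] at hadd
      exact hadd
end
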